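/- arXiv:1910.04019 — 4 statements merged into one kernel-verified Lean document; each statement's English description precedes it below -/
import Mathlib

section
/- Let (G,σ) be a connected, unbalanced magnetic graph with an entire signature σ taking values in S¹_ℓ. Suppose G has diameter D and finite magnetic girth g^σ, and let D̂ denote the diameter of the lift Ĝ. Then D̂ ≤ 2D + ℓ·g^σ. -/
open Finset ComplexConjugate
open scoped Classical

namespace Mag

variable {V : Type*}

/-- The degree of a vertex: total weight of incident edges. -/
noncomputable def deg [Fintype V] (p : V → V → ℝ) (x : V) : ℝ := ∑ y, p x y

/-- Adjacency: positive edge weight. -/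
def Adj (p : V → V → ℝ) (x y : V) : Prop := 0 < p x y

/-- Axioms of a weighted graph: symmetric nonnegative weights, no loops,
positive degrees. -/
structure IsWeightedGraph [Fintype V] (p : V → V → ℝ) : Prop where
  symm : ∀ x y, p x y = p y x
  nonneg : ∀ x y, 0 ≤ p x y
  loopless : ∀ x, p x x = 0
  deg_pos : ∀ x, 0 < deg p x

/-- Connectivity: any two vertices are joined by a path of successively
adjacent vertices. -/
def Connected (p : V → V → ℝ) : Prop :=
  ∀ x y : V, ∃ L : List V,
    List.Chain (Adj p) x L ∧ (x :: L).getLast (List.cons_ne_nil x L) = y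

/-- The graph distance from `x` to `y` is at most `n`. -/
def distLE (p : V → V → ℝ) (x y : V) (n : ℕ) : Prop :=
  ∃ L : List V, L.length ≤ n ∧ List.Chain (Adj p) x L ∧
    (x :: L).getLast (List.cons_ne_nil x L) = y

/-- `D` is the diameter: every pair of vertices is at distance at most `D`,
and some pair is at distance at least `D`. -/
def IsDiameter (p : V → V → ℝ) (D : ℕ) : Prop :=
  (∀ x y, distLE p x y D) ∧ ∃ x y, ∀ n, distLE p x y n → D ≤ n

/-- The (normalized) graph Laplace operator on complex-valued functions. -/
noncomputable def lap [Fintype V] (p : V → V → ℝ) (f : V → ℂ) (x : V) : ℂ :=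
  (deg p x : ℂ)⁻¹ * ∑ y, (p x y : ℂ) * (f y - f x)

/-- The graph Laplace operator acting on real-valued functions. -/
noncomputable def lapR [Fintype V] (p : V → V → ℝ) (u : V → ℝ) (x : V) : ℝ :=
  (deg p x)⁻¹ * ∑ y, p x y * (u y - u x)

/-- The energy `|∇f|²(x)` of a function at a vertex. -/
noncomputable def energy [Fintype V] (p : V → V → ℝ) (f : V → ℂ) (x : V) : ℝ :=
  (deg p x)⁻¹ * ∑ y, p x y * ‖f y - f x‖ ^ 2

/-- The first curvature operator `Γ`. -/
noncomputable def gamma [Fintype V] (p : V → V → ℝ) (f g : V → ℂ) (x : V) : ℂ :=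
  (1 / 2) * (lap p (fun v => f v * conj (g v)) x - f x * conj (lap p g x)
    - lap p f x * conj (g x))

/-- The iterated (Ricci) curvature operator `Γ₂`. -/
noncomputable def gamma2 [Fintype V] (p : V → V → ℝ) (f g : V → ℂ) (x : V) : ℂ :=
  (1 / 2) * (lap p (gamma p f g) x - gamma p f (lap p g) x - gamma p (lap p f) g x)

/-- `f` satisfies the curvature-dimension inequality `CD(n,κ)`:
`Γ₂(f,f)(x) ≥ (1/n)|Δf(x)|² + κ·Γ(f,f)(x)` at every vertex. -/
def SatCD [Fintype V] (p : V → V → ℝ) (n κ : ℝ) (f : V → ℂ) : Prop :=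
  ∀ x : V, (1 / n) * ‖lap p f x‖ ^ 2 + κ * (gamma p f f x).re ≤ (gamma2 p f f x).re

/-- The magnetic Laplace operator. -/
noncomputable def magLap [Fintype V] (p : V → V → ℝ) (σ : V → V → ℂ)
    (f : V → ℂ) (x : V) : ℂ :=
  (deg p x : ℂ)⁻¹ * ∑ y, (p x y : ℂ) * (σ x y * f y - f x)

/-- The magnetic energy `|∇^σ f|²(x)`. -/
noncomputable def magEnergy [Fintype V] (p : V → V → ℝ) (σ : V → V → ℂ)
    (f : V → ℂ) (x : V) : ℝ :=
  (deg p x)⁻¹ * ∑ y, p x y * ‖σ x y * f y - f x‖ ^ 2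

/-- The first magnetic curvature operator `Γ^σ`. -/
noncomputable def magGamma [Fintype V] (p : V → V → ℝ) (σ : V → V → ℂ)
    (f g : V → ℂ) (x : V) : ℂ :=
  (1 / 2) * (magLap p σ (fun v => f v * conj (g v)) x - f x * conj (magLap p σ g x)
    - magLap p σ f x * conj (g x))

/-- The magnetic Ricci curvature operator `Γ₂^σ`. -/
noncomputable def magGamma2 [Fintype V] (p : V → V → ℝ) (σ : V → V → ℂ)
    (f g : V → ℂ) (x : V) : ℂ :=
  (1 / 2) * (lap p (magGamma p σ f g) x - magGamma p σ f (magLap p σ g) x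
    - magGamma p σ (magLap p σ f) g x)

/-- `f` satisfies the magnetic curvature-dimension inequality `CD^σ(n,κ)`. -/
def SatCDSigma [Fintype V] (p : V → V → ℝ) (σ : V → V → ℂ) (n κ : ℝ)
    (f : V → ℂ) : Prop :=
  ∀ x : V, (1 / n) * ‖magLap p σ f x‖ ^ 2 + κ * (magGamma p σ f f x).re
    ≤ (magGamma2 p σ f f x).re

/-- A signature with values in the group `S¹_ℓ` of `ℓ`-th roots of unity:
`σ_{xy}^ℓ = 1` and `σ_{yx} = σ_{xy}⁻¹` on oriented edges. -/
structure IsSignature (p : V → V → ℝ) (σ : V → V → ℂ) (ℓ : ℕ) : Prop where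
  mem : ∀ x y, Adj p x y → σ x y ^ ℓ = 1
  inv : ∀ x y, Adj p x y → σ x y * σ y x = 1

/-- The signature is entire: its values (on oriented edges) generate all of
`S¹_ℓ`, i.e. every `ℓ`-th root of unity is a product of signature values. -/
def Entire (p : V → V → ℝ) (σ : V → V → ℂ) (ℓ : ℕ) : Prop :=
  ∀ z : ℂ, z ^ ℓ = 1 →
    ∃ L : List (V × V), (∀ e ∈ L, Adj p e.1 e.2) ∧ (L.map fun e => σ e.1 e.2).prod = z

/-- The product of the signature values along the consecutive edges of a
list of vertices. -/
noncomputable def sigProd (σ : V → V → ℂ) (L : List V) : ℂ :=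
  ((L.zip L.tail).map fun e => σ e.1 e.2).prod

/-- A directed cycle: a closed walk along adjacent vertices. -/
def IsCycle (p : V → V → ℝ) (L : List V) : Prop :=
  2 ≤ L.length ∧ L.Chain' (Adj p) ∧ L.head? = L.getLast?

/-- A magnetic graph is balanced if the signature product along every directed
cycle equals `1`. -/
def Balanced (p : V → V → ℝ) (σ : V → V → ℂ) : Prop :=
  ∀ L : List V, IsCycle p L → sigProd σ L = 1

/-- A directed cycle whose signature product generates `S¹_ℓ`. -/
def IsGenCycle (p : V → V → ℝ) (σ : V → V → ℂ) (ℓ : ℕ) (L : List V) : Prop :=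
  IsCycle p L ∧ ∀ z : ℂ, z ^ ℓ = 1 → ∃ m : ℕ, sigProd σ L ^ m = z

/-- `g` is the magnetic girth: the length of a shortest directed cycle whose
signature product generates `S¹_ℓ`.  (A list of `g+1` vertices, with equal
endpoints, traverses `g` edges.) -/
def IsMagGirth (p : V → V → ℝ) (σ : V → V → ℂ) (ℓ : ℕ) (g : ℕ) : Prop :=
  (∃ L, IsGenCycle p σ ℓ L ∧ L.length = g + 1) ∧
  ∀ L, IsGenCycle p σ ℓ L → g + 1 ≤ L.length

/-- The `ℓ`-th roots of unity in `ℂ` form a finite type. -/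
noncomputable instance rootsFintype (ℓ : ℕ) [NeZero ℓ] :
    Fintype {z : ℂ // z ^ ℓ = 1} := by
  apply Fintype.ofFinset ((Polynomial.nthRoots ℓ (1 : ℂ)).toFinset)
  intro z
  rw [Multiset.mem_toFinset, Polynomial.mem_nthRoots (Nat.pos_of_ne_zero (NeZero.ne ℓ))]
  exact Iff.rfl

/-- The weight function of the lift (covering) graph `Ĝ` on `V × S¹_ℓ`. -/
noncomputable def liftP (p : V → V → ℝ) (σ : V → V → ℂ) (ℓ : ℕ) :
    V × {z : ℂ // z ^ ℓ = 1} → V × {z : ℂ // z ^ ℓ = 1} → ℝ :=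
  fun a b =>
    if Adj p a.1 b.1 ∧ (b.2 : ℂ) = (a.2 : ℂ) * σ a.1 b.1 then p a.1 b.1 else 0

/-- The lift embedding `f̂(x,ξ) = ξ·f(x)`. -/
noncomputable def liftEmb (ℓ : ℕ) (f : V → ℂ) : V × {z : ℂ // z ^ ℓ = 1} → ℂ :=
  fun a => (a.2 : ℂ) * f a.1

/-- A simple graph: all edge weights are `0` or `1`. -/
def Simple (p : V → V → ℝ) : Prop := ∀ x y, p x y = 0 ∨ p x y = 1

/-- `d` is the maximum degree of the graph. -/
def IsMaxDegree [Fintype V] (p : V → V → ℝ) (d : ℝ) : Prop :=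
  (∀ x, deg p x ≤ d) ∧ ∃ x, deg p x = d

/-- `l` is the least eigenvalue of `-Δ^σ`. -/
def IsLeastEigenvalue [Fintype V] (p : V → V → ℝ) (σ : V → V → ℂ) (l : ℝ) : Prop :=
  (∃ f : V → ℂ, f ≠ 0 ∧ ∀ x, -magLap p σ f x = (l : ℂ) * f x) ∧
  ∀ (μ : ℝ) (f : V → ℂ), f ≠ 0 → (∀ x, -magLap p σ f x = (μ : ℂ) * f x) → l ≤ μ

/-- The set of frustration values of a vertex subset `V₁`: sums
`∑_{edges {x,y} ⊆ V₁} p(x,y)|τ(x) − σ_{xy}τ(y)|` over switching functions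
`τ : V₁ → S¹_ℓ`.  (Each undirected edge is counted once, via the factor `1/2`.) -/
def frustrationSet [Fintype V] (p : V → V → ℝ) (σ : V → V → ℂ) (ℓ : ℕ)
    (V₁ : Finset V) : Set ℝ :=
  { r | ∃ τ : V → ℂ, (∀ x ∈ V₁, τ x ^ ℓ = 1) ∧
      r = (1 / 2) * ∑ x ∈ V₁, ∑ y ∈ V₁, p x y * ‖τ x - σ x y * τ y‖ }

/-- The set of Cheeger ratios `(ι^σ(V₁) + |E(V₁,V₁ᶜ)|)/vol(V₁)` over nonempty
vertex subsets `V₁`, where `ι^σ(V₁)` is the frustration index of `V₁`. -/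
def cheegerSet [Fintype V] (p : V → V → ℝ) (σ : V → V → ℂ) (ℓ : ℕ) : Set ℝ :=
  { r | ∃ V₁ : Finset V, V₁.Nonempty ∧ ∃ ι : ℝ, IsLeast (frustrationSet p σ ℓ V₁) ι ∧
      r = (ι + ∑ x ∈ V₁, ∑ y ∈ V₁ᶜ, p x y) / ∑ x ∈ V₁, deg p x }

/-- `h` is the magnetic Cheeger number `h₁^σ`. -/
def IsCheeger [Fintype V] (p : V → V → ℝ) (σ : V → V → ℂ) (ℓ : ℕ) (h : ℝ) : Prop :=
  IsLeast (cheegerSet p σ ℓ) h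

/-! Any two points `(x, ξ)`, `(y, η)` of the lift are joined through the fibre over the base
point `v` of a shortest generating cycle: a shortest path from `x` to `v` lifts forwards from
`(x, ξ)`, a shortest path from `v` to `y` lifts backwards onto `(y, η)`, and since the signature
product of the cycle generates `S¹_ℓ`, winding around the cycle fewer than `ℓ` times joins any two
points of the fibre over `v`. -/

section LiftWalks

variable {V : Type*} {p : V → V → ℝ} {σ : V → V → ℂ} {ℓ : ℕ} {x y z v : V} {n m : ℕ}

theorem distLE.mono (h : distLE p x y n) (hnm : n ≤ m) : distLE p x y m := by
  obtain ⟨L, hL, hc, hlast⟩ := h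
  exact ⟨L, hL.trans hnm, hc, hlast⟩

theorem distLE_self (x : V) : distLE p x x 0 :=
  ⟨[], le_rfl, .singleton x, rfl⟩

theorem distLE.trans (h₁ : distLE p x y n) (h₂ : distLE p y z m) : distLE p x z (n + m) := by
  obtain ⟨L₁, hL₁, hc₁, rfl⟩ := h₁
  obtain ⟨L₂, hL₂, hc₂, rfl⟩ := h₂
  refine ⟨L₁ ++ L₂, by simp only [List.length_append]; omega, ?_, ?_⟩
  · change List.IsChain _ ((x :: L₁) ++ L₂)
    exact hc₁.append hc₂.tail fun a ha b hb => by
      rw [List.getLast?_eq_some_getLast (List.cons_ne_nil x L₁), Option.mem_some_iff] at ha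
      exact ha ▸ hc₂.rel_head? hb
  · cases L₂ with
    | nil => simp
    | cons b t => simp [List.getLast_append_of_ne_nil]

theorem sigProd_cons_cons (x a : V) (t : List V) :
    sigProd σ (x :: a :: t) = σ x a * sigProd σ (a :: t) := by
  simp [sigProd]

theorem sigProd_pow_eq_one (hσ : IsSignature p σ ℓ) :
    ∀ {L : List V}, L.IsChain (Adj p) → sigProd σ L ^ ℓ = 1
  | [], _ | [_], _ => by simp [sigProd]
  | x :: a :: t, hc => by
    rw [List.isChain_cons_cons] at hc
    rw [sigProd_cons_cons, mul_pow, hσ.mem x a hc.1, sigProd_pow_eq_one hσ hc.2, one_mul]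

theorem distLE_liftP_of_isChain (hσ : IsSignature p σ ℓ) :
    ∀ {x : V} {L : List V} {ξ η : {z : ℂ // z ^ ℓ = 1}}, (x :: L).IsChain (Adj p) →
      (η : ℂ) = ξ * sigProd σ (x :: L) →
      distLE (liftP p σ ℓ) (x, ξ) ((x :: L).getLast (List.cons_ne_nil x L), η) L.length
  | x, [], ξ, η, _, hη => by
    obtain rfl : η = ξ := Subtype.ext (by simpa [sigProd] using hη)
    exact distLE_self _
  | x, a :: t, ξ, η, hc, hη => by
    rw [List.isChain_cons_cons] at hc
    let ξ' : {z : ℂ // z ^ ℓ = 1} := ⟨ξ * σ x a, by rw [mul_pow, ξ.2, hσ.mem x a hc.1, one_mul]⟩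
    have hstep : distLE (liftP p σ ℓ) (x, ξ) (a, ξ') 1 := by
      refine ⟨[(a, ξ')], le_rfl, List.isChain_pair.mpr ?_, rfl⟩
      change 0 < liftP p σ ℓ (x, ξ) (a, ξ')
      rw [liftP, if_pos ⟨hc.1, rfl⟩]
      exact hc.1
    have hrest := distLE_liftP_of_isChain hσ (ξ := ξ') (η := η) hc.2
      (by rw [hη, sigProd_cons_cons, mul_assoc])
    rw [List.getLast_cons (List.cons_ne_nil a t)]
    exact (hstep.trans hrest).mono (by simp only [List.length_cons]; omega)

theorem distLE.exists_liftP_right (hσ : IsSignature p σ ℓ) (h : distLE p x y n)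
    (ξ : {z : ℂ // z ^ ℓ = 1}) : ∃ η, distLE (liftP p σ ℓ) (x, ξ) (y, η) n := by
  obtain ⟨L, hL, hc, rfl⟩ := h
  let η : {z : ℂ // z ^ ℓ = 1} :=
    ⟨ξ * sigProd σ (x :: L), by rw [mul_pow, ξ.2, sigProd_pow_eq_one hσ hc, one_mul]⟩
  exact ⟨η, (distLE_liftP_of_isChain hσ hc rfl).mono hL⟩

theorem distLE.exists_liftP_left [NeZero ℓ] (hσ : IsSignature p σ ℓ) (h : distLE p x y n)
    (η : {z : ℂ // z ^ ℓ = 1}) : ∃ ξ, distLE (liftP p σ ℓ) (x, ξ) (y, η) n := by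
  obtain ⟨L, hL, hc, rfl⟩ := h
  have hs := sigProd_pow_eq_one hσ hc
  have hs₀ : sigProd σ (x :: L) ≠ 0 := (IsUnit.of_pow_eq_one hs (NeZero.ne ℓ)).ne_zero
  let ξ : {z : ℂ // z ^ ℓ = 1} :=
    ⟨η * (sigProd σ (x :: L))⁻¹, by rw [mul_pow, η.2, inv_pow, hs, inv_one, one_mul]⟩
  refine ⟨ξ, (distLE_liftP_of_isChain hσ hc ?_).mono hL⟩
  simp [ξ, hs₀]

theorem distLE_liftP_of_closedWalk_pow (hσ : IsSignature p σ ℓ) {T : List V} (hc : (v :: T).IsChain (Adj p))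
    (hv : (v :: T).getLast (List.cons_ne_nil v T) = v) :
    ∀ (j : ℕ) {ζ η : {z : ℂ // z ^ ℓ = 1}}, (η : ℂ) = ζ * sigProd σ (v :: T) ^ j →
      distLE (liftP p σ ℓ) (v, ζ) (v, η) (j * T.length)
  | 0, ζ, η, hη => by
    obtain rfl : η = ζ := Subtype.ext (by simpa using hη)
    exact (distLE_self _).mono (Nat.zero_le _)
  | j + 1, ζ, η, hη => by
    let ζ' : {z : ℂ // z ^ ℓ = 1} :=
      ⟨ζ * sigProd σ (v :: T), by rw [mul_pow, ζ.2, sigProd_pow_eq_one hσ hc, one_mul]⟩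
    have hlap := distLE_liftP_of_isChain hσ (ξ := ζ) (η := ζ') hc rfl
    rw [hv] at hlap
    have hrest := distLE_liftP_of_closedWalk_pow hσ hc hv j (ζ := ζ') (η := η) (by rw [hη, pow_succ']; ring)
    exact (hlap.trans hrest).mono (by rw [Nat.succ_mul, Nat.add_comm])

theorem IsGenCycle.distLE_liftP_fiber [NeZero ℓ] (hσ : IsSignature p σ ℓ) {T : List V}
    (hC : IsGenCycle p σ ℓ (v :: T)) (ζ η : {z : ℂ // z ^ ℓ = 1}) :
    distLE (liftP p σ ℓ) (v, ζ) (v, η) (ℓ * T.length) := by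
  obtain ⟨⟨-, hc, hends⟩, hgen⟩ := hC
  have hv : (v :: T).getLast (List.cons_ne_nil v T) = v := by
    simpa [List.getLast?_eq_some_getLast] using hends.symm
  have hs := sigProd_pow_eq_one hσ hc
  have hζ₀ : (ζ : ℂ) ≠ 0 := (IsUnit.of_pow_eq_one ζ.2 (NeZero.ne ℓ)).ne_zero
  obtain ⟨j, hj⟩ := hgen (η * (ζ : ℂ)⁻¹) (by rw [mul_pow, η.2, inv_pow, ζ.2, inv_one, one_mul])
  have hlap := distLE_liftP_of_closedWalk_pow hσ hc hv (j % ℓ) (ζ := ζ) (η := η)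
    (by rw [← pow_eq_pow_mod j hs, hj]; field_simp)
  exact hlap.mono (Nat.mul_le_mul_right _ (Nat.mod_lt j (Nat.pos_of_neZero ℓ)).le)

end LiftWalks

theorem lift_diameter_le_general {V : Type*}
    (p : V → V → ℝ) (σ : V → V → ℂ) (ℓ : ℕ) [NeZero ℓ]
    (hσ : IsSignature p σ ℓ)
    (D g Dhat : ℕ) (hD : IsDiameter p D) (hg : IsMagGirth p σ ℓ g)
    (hDhat : IsDiameter (liftP p σ ℓ) Dhat) :
    Dhat ≤ 2 * D + ℓ * g := by
  obtain ⟨⟨_ | ⟨v, T⟩, hC, hlen⟩, -⟩ := hg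
  · simp at hlen
  obtain ⟨⟨x, ξ⟩, ⟨y, η⟩, hfar⟩ := hDhat.2
  obtain ⟨ζ, hxv⟩ := (hD.1 x v).exists_liftP_right hσ ξ
  obtain ⟨ζ', hvy⟩ := (hD.1 v y).exists_liftP_left hσ η
  have hT : T.length = g := by simpa using hlen
  calc Dhat ≤ D + ℓ * T.length + D :=
        hfar _ ((hxv.trans (hC.distLE_liftP_fiber hσ ζ ζ')).trans hvy)
    _ = 2 * D + ℓ * g := by rw [hT]; ring

/-- Lemma `liftdiameter`.  For a connected, unbalanced magnetic
graph with entire signature in `S¹_ℓ`, diameter `D` and finite magnetic girth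
`g^σ`, the diameter `D̂` of the lift satisfies `D̂ ≤ 2D + ℓ·g^σ`. -/
theorem lift_diameter_le {V : Type*} [Fintype V] [Nonempty V]
    (p : V → V → ℝ) (σ : V → V → ℂ) (ℓ : ℕ) [NeZero ℓ]
    (hG : IsWeightedGraph p) (hconn : Connected p)
    (hσ : IsSignature p σ ℓ) (hent : Entire p σ ℓ) (hunbal : ¬ Balanced p σ)
    (D g Dhat : ℕ) (hD : IsDiameter p D) (hg : IsMagGirth p σ ℓ g)
    (hDhat : IsDiameter (liftP p σ ℓ) Dhat) :
    Dhat ≤ 2 * D + ℓ * g :=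
  lift_diameter_le_general p σ ℓ hσ D g Dhat hD hg hDhat

end Mag
end

section
/- Let (G,σ) be a magnetic graph with signature values in S¹_ℓ. For every function f : V → ℂ and every vertex (x,ξ) ∈ V × S¹_ℓ of the lift Ĝ, the energy of the lift embedding f̂ computed in Ĝ equals the magnetic energy of f at x: |∇f̂|²(x,ξ) = |∇^σ f|²(x). -/
open Finset ComplexConjugate
open scoped Classical

namespace Mag

variable {V : Type*}

section Lift

variable [Fintype V] {p : V → V → ℝ} {σ : V → V → ℂ} {ℓ : ℕ} [NeZero ℓ]
  {x : V} (ξ : {z : ℂ // z ^ ℓ = 1})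

/- Above `(x, ξ)`, the fibre over `y` of the lift carries a single edge, to `(y, ξ σ_{xy})`, of
weight `p(x,y)`; when `x ≁ y` both sides vanish because `p(x,y) = 0`. -/
theorem sum_liftP_mul (hp : ∀ y, 0 ≤ p x y) (hσ : ∀ y, Adj p x y → σ x y ^ ℓ = 1)
    (h : V → ℂ → ℝ) :
    ∑ a, liftP p σ ℓ (x, ξ) a * h a.1 a.2 = ∑ y, p x y * h y (ξ * σ x y) := by
  refine (Fintype.sum_prod_type _).trans (sum_congr rfl fun y _ => ?_)
  by_cases hxy : Adj p x y
  · have hmem : ((ξ : ℂ) * σ x y) ^ ℓ = 1 := by rw [mul_pow, ξ.2, hσ y hxy, one_mul]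
    rw [Fintype.sum_eq_single ⟨_, hmem⟩ fun η hη => ?_]
    · simp [liftP, hxy]
    · have hη' : (η : ℂ) ≠ ξ * σ x y := fun h => hη (Subtype.ext h)
      simp [liftP, hη']
  · have hp0 : p x y = 0 := le_antisymm (not_lt.mp hxy) (hp y)
    simp [liftP, hxy, hp0]

theorem deg_liftP (hp : ∀ y, 0 ≤ p x y) (hσ : ∀ y, Adj p x y → σ x y ^ ℓ = 1) :
    deg (liftP p σ ℓ) (x, ξ) = deg p x := by
  simpa [deg] using sum_liftP_mul ξ hp hσ fun _ _ => 1

end Lift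

theorem lift_energy_general {V : Type*} [Fintype V]
    (p : V → V → ℝ) (σ : V → V → ℂ) (ℓ : ℕ) [NeZero ℓ]
    (hG : IsWeightedGraph p) (hσ : IsSignature p σ ℓ)
    (f : V → ℂ) (x : V) (ξ : {z : ℂ // z ^ ℓ = 1}) :
    energy (liftP p σ ℓ) (liftEmb ℓ f) (x, ξ) = magEnergy p σ f x := by
  have hξ : ‖(ξ : ℂ)‖ = 1 := Complex.norm_eq_one_of_pow_eq_one ξ.2 (NeZero.ne ℓ)
  have hp : ∀ y, 0 ≤ p x y := hG.nonneg x
  rw [energy, magEnergy, deg_liftP ξ hp (hσ.mem x)]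
  congr 1
  refine (sum_liftP_mul ξ hp (hσ.mem x) fun y η => ‖η * f y - ξ * f x‖ ^ 2).trans ?_
  refine sum_congr rfl fun y _ => ?_
  rw [mul_assoc, ← mul_sub, norm_mul, hξ, one_mul]

/-- The energy of the lift embedding `f̂` computed in the lift
`Ĝ` equals the magnetic energy of `f`: `|∇f̂|²(x,ξ) = |∇^σ f|²(x)`. -/
theorem lift_energy {V : Type*} [Fintype V] [Nonempty V]
    (p : V → V → ℝ) (σ : V → V → ℂ) (ℓ : ℕ) [NeZero ℓ]
    (hG : IsWeightedGraph p) (hσ : IsSignature p σ ℓ)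
    (f : V → ℂ) (x : V) (ξ : {z : ℂ // z ^ ℓ = 1}) :
    energy (liftP p σ ℓ) (liftEmb ℓ f) (x, ξ) = magEnergy p σ f x :=
  lift_energy_general p σ ℓ hG hσ f x ξ

end Mag
end

section
/- Let G be a finite connected weighted graph, n ∈ (1,∞), κ ∈ ℝ, and suppose f : V → ℂ satisfies CD(n,κ). Then at each vertex x ∈ V: (4/n − 2)·|Δf(x)|² + (2 + 2κ)·|∇f|²(x) ≤ (1/d_x) ∑_{y ∼ x} (p(x,y)/d_y) ∑_{z ∼ y} p(y,z)·|f(x) − 2f(y) + f(z)|². -/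
open Finset ComplexConjugate
open scoped Classical

namespace Mag

variable {V : Type*}

/-! Writing `f x - 2 f y + f z = (f z - f y) - (f y - f x)` and expanding the square, the
two-step average on the right becomes `4 Re Γ₂(f,f)(x) + 2 |∇f|²(x) - 2 |Δf(x)|²`, a discrete
Bochner identity. Since `Re Γ(f,f) = |∇f|²/2`, the bound is then `CD(n,κ)` at `x`, multiplied
by four. -/

section

open scoped InnerProductSpace

variable [Fintype V] (p : V → V → ℝ)

theorem lap_eq_smul (f : V → ℂ) (x : V) :
    lap p f x = (deg p x)⁻¹ • ∑ y, p x y • (f y - f x) := by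
  simp only [lap, Complex.real_smul, Complex.ofReal_inv]

theorem inv_deg_mul_sum_add_const {x : V} (hx : deg p x ≠ 0) (u : V → ℝ) (c : ℝ) :
    (deg p x)⁻¹ * ∑ y, p x y * (u y + c) = (deg p x)⁻¹ * ∑ y, p x y * u y + c := by
  have hsum : ∑ y, p x y * c = deg p x * c := Finset.sum_mul .. |>.symm
  rw [Finset.sum_congr rfl fun y _ => mul_add (p x y) (u y) c, Finset.sum_add_distrib, hsum,
    mul_add, inv_mul_cancel_left₀ hx]

theorem re_lap (g : V → ℂ) (x : V) :
    (lap p g x).re = (deg p x)⁻¹ * ∑ y, p x y * ((g y).re - (g x).re) := by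
  simp [lap_eq_smul, Complex.re_sum]

theorem inner_lap_left (f : V → ℂ) (x : V) (a : ℂ) :
    ⟪lap p f x, a⟫_ℝ = (deg p x)⁻¹ * ∑ y, p x y * ⟪f y - f x, a⟫_ℝ := by
  simp only [lap_eq_smul, real_inner_smul_left, sum_inner]

theorem gamma_eq (f g : V → ℂ) (x : V) :
    gamma p f g x = (1 / 2) * ((deg p x : ℂ)⁻¹ *
      ∑ y, (p x y : ℂ) * ((f y - f x) * conj (g y - g x))) := by
  simp only [gamma, lap, map_mul, map_inv₀, map_sum, map_sub, Complex.conj_ofReal,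
    Finset.mul_sum, Finset.sum_mul, ← Finset.sum_sub_distrib]
  exact Finset.sum_congr rfl fun y _ => by ring

theorem re_gamma (f g : V → ℂ) (x : V) :
    (gamma p f g x).re = ((deg p x)⁻¹ * ∑ y, p x y * ⟪g y - g x, f y - f x⟫_ℝ) / 2 := by
  rw [gamma_eq, show (1 / 2 : ℂ) = ((1 / 2 : ℝ) : ℂ) by norm_num, ← Complex.ofReal_inv,
    Complex.re_ofReal_mul, Complex.re_ofReal_mul, Complex.re_sum]
  simp only [Complex.re_ofReal_mul, Complex.inner]
  ring

theorem re_gamma_self (f : V → ℂ) (x : V) : (gamma p f f x).re = energy p f x / 2 := by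
  simp only [re_gamma, real_inner_self_eq_norm_sq, energy]

theorem four_mul_re_gamma2 {x : V} (hx : deg p x ≠ 0) (f : V → ℂ) :
    4 * (gamma2 p f f x).re =
      (deg p x)⁻¹ * ∑ y, p x y * energy p f y - energy p f x
        - 2 * ((deg p x)⁻¹ * ∑ y, p x y * ⟪f y - f x, lap p f y⟫_ℝ) + 2 * ‖lap p f x‖ ^ 2 := by
  have hre : (gamma2 p f f x).re = ((lap p (gamma p f f) x).re
      - (gamma p f (lap p f) x).re - (gamma p (lap p f) f x).re) / 2 := by
    rw [gamma2, one_div_mul_eq_div, Complex.div_ofNat_re, Complex.sub_re, Complex.sub_re]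
  have hΔΓ : 2 * (lap p (gamma p f f) x).re
      = (deg p x)⁻¹ * ∑ y, p x y * energy p f y - energy p f x := by
    have halve : ∀ y, p x y * (energy p f y / 2 - energy p f x / 2)
        = p x y * (energy p f y + -energy p f x) / 2 := fun y => by ring
    rw [re_lap]
    simp only [re_gamma_self, halve]
    rw [← Finset.sum_div, ← mul_div_assoc, inv_deg_mul_sum_add_const p hx]
    ring
  have hsymm : (gamma p f (lap p f) x).re = (gamma p (lap p f) f x).re := by
    simp only [re_gamma]
    simp_rw [real_inner_comm (f _ - f x)]
  have hΓ : 2 * (gamma p (lap p f) f x).re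
      = (deg p x)⁻¹ * ∑ y, p x y * ⟪f y - f x, lap p f y⟫_ℝ - ‖lap p f x‖ ^ 2 := by
    rw [re_gamma, ← real_inner_self_eq_norm_sq, inner_lap_left]
    simp only [inner_sub_right, mul_sub, Finset.sum_sub_distrib]
    ring
  rw [hre, hsymm]
  linear_combination hΔΓ - 2 * hΓ

theorem inv_deg_mul_sum_norm_sq_second_diff {y : V} (hy : deg p y ≠ 0) (f : V → ℂ) (x : V) :
    (deg p y)⁻¹ * ∑ z, p y z * ‖f x - 2 * f y + f z‖ ^ 2
      = energy p f y - 2 * ⟪f y - f x, lap p f y⟫_ℝ + ‖f y - f x‖ ^ 2 := by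
  have hz : ∀ z, ‖f x - 2 * f y + f z‖ ^ 2
      = ‖f z - f y‖ ^ 2 - 2 * ⟪f z - f y, f y - f x⟫_ℝ + ‖f y - f x‖ ^ 2 := fun z => by
    rw [← norm_sub_sq_real]
    congr 2
    ring
  simp only [hz, inv_deg_mul_sum_add_const p hy]
  rw [real_inner_comm, inner_lap_left, energy]
  simp only [mul_sub, Finset.sum_sub_distrib, Finset.mul_sum]
  congr 2
  exact Finset.sum_congr rfl fun z _ => by ring

theorem two_step_mean_norm_sq_second_diff (hd : ∀ v, deg p v ≠ 0) (f : V → ℂ) (x : V) :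
    (deg p x)⁻¹ * ∑ y, (p x y / deg p y) * ∑ z, p y z * ‖f x - 2 * f y + f z‖ ^ 2
      = 4 * (gamma2 p f f x).re + 2 * energy p f x - 2 * ‖lap p f x‖ ^ 2 := by
  have hy : ∀ y, (p x y / deg p y) * ∑ z, p y z * ‖f x - 2 * f y + f z‖ ^ 2
      = p x y * energy p f y - 2 * (p x y * ⟪f y - f x, lap p f y⟫_ℝ)
        + p x y * ‖f y - f x‖ ^ 2 := fun y => by
    rw [div_eq_mul_inv, mul_assoc, inv_deg_mul_sum_norm_sq_second_diff p (hd y)]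
    ring
  simp only [hy, Finset.sum_add_distrib, Finset.sum_sub_distrib, ← Finset.mul_sum]
  rw [four_mul_re_gamma2 p (hd x), energy]
  ring

end

theorem energy_laplace_bound_general {V : Type*} [Fintype V]
    (p : V → V → ℝ) (hG : IsWeightedGraph p)
    (n κ : ℝ) (f : V → ℂ) (hf : SatCD p n κ f) (x : V) :
    (4 / n - 2) * ‖lap p f x‖ ^ 2 + (2 + 2 * κ) * energy p f x ≤
      (deg p x)⁻¹ * ∑ y, (p x y / deg p y) *
        ∑ z, p y z * ‖f x - 2 * f y + f z‖ ^ 2 := by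
  have hCD := hf x
  rw [re_gamma_self] at hCD
  rw [two_step_mean_norm_sq_second_diff p (fun v => (hG.deg_pos v).ne') f x,
    div_eq_mul_one_div 4 n]
  linarith

/-- Lemma 2.1.  If `f` satisfies `CD(n,κ)`, then at each
vertex `x`:
`(4/n − 2)|Δf(x)|² + (2 + 2κ)|∇f|²(x)
  ≤ (1/d_x) ∑_{y∼x} (p_{xy}/d_y) ∑_{z∼y} p_{yz}|f(x) − 2f(y) + f(z)|²`. -/
theorem energy_laplace_bound {V : Type*} [Fintype V] [Nonempty V]
    (p : V → V → ℝ) (hG : IsWeightedGraph p) (hconn : Connected p)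
    (n κ : ℝ) (hn : 1 < n) (f : V → ℂ) (hf : SatCD p n κ f) (x : V) :
    (4 / n - 2) * ‖lap p f x‖ ^ 2 + (2 + 2 * κ) * energy p f x ≤
      (deg p x)⁻¹ * ∑ y, (p x y / deg p y) *
        ∑ z, p y z * ‖f x - 2 * f y + f z‖ ^ 2 :=
  energy_laplace_bound_general p hG n κ f hf x

end Mag
end

section
/- Let G be a finite connected weighted graph, n ∈ (1,∞), κ ∈ ℝ, and suppose f : V → ℂ is a nonzero eigenfunction of −Δ with eigenvalue λ > 0 which satisfies CD(n,κ). Then for every real α > 2 − 2κ/λ and every vertex x ∈ V: |∇f|²(x) + α·λ·|f(x)|² ≤ λ·((α² − 4/n)·λ + 2κα)/((α − 2)·λ + 2κ) · max_{z ∈ V} |f(z)|². -/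
/-! Let `x₀` maximise `F = |∇f|² + αλ|f|²`. For an eigenfunction, `Δ|f|² = |∇f|² - 2λ|f|²` and
`Δ|∇f|² = 4Γ₂(f,f) - 2λ|∇f|²`, so the maximum principle `ΔF(x₀) ≤ 0` combined with `CD(n,κ)` at
`x₀` gives `((α - 2)λ + 2κ)|∇f|²(x₀) ≤ (2α - 4/n)λ²|f(x₀)|²`; this bounds `F ≤ F(x₀)` by the
stated constant times `|f(x₀)|²`. That constant is positive because the Lichnerowicz estimate
`κ ≤ λ(1 - 1/n)` forces `α > 2/n`. -/

open Finset ComplexConjugate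
open scoped Classical

namespace Mag

variable {V : Type*}

section Calculus

variable [Fintype V] {p : V → V → ℝ}

lemma lapR_add (u w : V → ℝ) (x : V) :
    lapR p (fun v => u v + w v) x = lapR p u x + lapR p w x := by
  simp only [lapR, ← mul_add, ← sum_add_distrib]
  congr 1
  exact sum_congr rfl fun y _ => by ring

lemma lapR_const_mul (c : ℝ) (u : V → ℝ) (x : V) :
    lapR p (fun v => c * u v) x = c * lapR p u x := by
  simp only [lapR, mul_sum]
  exact sum_congr rfl fun y _ => by ring

lemma lap_const_mul (c : ℂ) (f : V → ℂ) (x : V) :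
    lap p (fun v => c * f v) x = c * lap p f x := by
  simp only [lap, mul_sum]
  exact sum_congr rfl fun y _ => by ring

lemma lap_ofReal (u : V → ℝ) (x : V) : lap p (fun v => (u v : ℂ)) x = lapR p u x := by
  simp only [lap, lapR]
  push_cast
  ring

lemma two_mul_gamma_self (f : V → ℂ) (x : V) : 2 * gamma p f f x = energy p f x := by
  have hsum : ∑ y, (p x y : ℂ) * (f y * conj (f y) - f x * conj (f x))
      - f x * ∑ y, (p x y : ℂ) * conj (f y - f x) - (∑ y, (p x y : ℂ) * (f y - f x)) * conj (f x)
      = ∑ y, (p x y : ℂ) * (‖f y - f x‖ : ℂ) ^ 2 := by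
    rw [mul_sum, sum_mul, ← sum_sub_distrib, ← sum_sub_distrib]
    refine sum_congr rfl fun y _ => ?_
    rw [← Complex.mul_conj', map_sub]
    ring
  simp only [gamma, lap, energy, map_mul, map_inv₀, Complex.conj_ofReal, map_sum,
    Complex.ofReal_mul, Complex.ofReal_inv, Complex.ofReal_sum, Complex.ofReal_pow]
  rw [← hsum]
  ring

lemma gamma_ofReal_mul_left (c : ℝ) (f g : V → ℂ) (x : V) :
    gamma p (fun v => c * f v) g x = c * gamma p f g x := by
  simp only [gamma, mul_assoc, lap_const_mul]
  ring

lemma gamma_ofReal_mul_right (c : ℝ) (f g : V → ℂ) (x : V) :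
    gamma p f (fun v => c * g v) x = c * gamma p f g x := by
  simp only [gamma, map_mul, Complex.conj_ofReal, mul_left_comm _ (c : ℂ), lap_const_mul]
  ring

lemma sum_deg_mul_lapR (hG : IsWeightedGraph p) (u : V → ℝ) :
    ∑ x, deg p x * lapR p u x = 0 := by
  have hcancel : ∀ x, deg p x * lapR p u x = ∑ y, p x y * u y - ∑ y, p x y * u x := by
    intro x
    rw [lapR, ← mul_assoc, mul_inv_cancel₀ (hG.deg_pos x).ne', one_mul, ← sum_sub_distrib]
    exact sum_congr rfl fun y _ => mul_sub _ _ _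
  rw [sum_congr rfl fun x _ => hcancel x, sum_sub_distrib, sum_comm, sub_eq_zero]
  exact sum_congr rfl fun x _ => sum_congr rfl fun y _ => by rw [hG.symm]

lemma lapR_nonpos_of_forall_le (hG : IsWeightedGraph p) {u : V → ℝ} {x₀ : V}
    (hmax : ∀ y, u y ≤ u x₀) : lapR p u x₀ ≤ 0 :=
  mul_nonpos_of_nonneg_of_nonpos (inv_nonneg.2 (hG.deg_pos x₀).le)
    (sum_nonpos fun y _ => mul_nonpos_of_nonneg_of_nonpos (hG.nonneg x₀ y)
      (sub_nonpos.2 (hmax y)))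

end Calculus

section Eigenfunction

variable [Fintype V] {p : V → V → ℝ} {f : V → ℂ} {lam : ℝ}

lemma lap_eq_of_eigen (heig : ∀ x, -lap p f x = lam * f x) :
    lap p f = fun v => ((-lam : ℝ) : ℂ) * f v :=
  funext fun v => by push_cast; linear_combination -heig v

lemma lapR_normSq_of_eigen (heig : ∀ x, -lap p f x = lam * f x) (x : V) :
    lapR p (fun v => ‖f v‖ ^ 2) x = energy p f x - 2 * lam * ‖f x‖ ^ 2 := by
  apply Complex.ofReal_injective
  have hsq : (fun v => ((‖f v‖ ^ 2 : ℝ) : ℂ)) = fun v => f v * conj (f v) :=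
    funext fun v => by push_cast; exact (Complex.mul_conj' _).symm
  rw [← lap_ofReal, hsq]
  push_cast
  rw [← two_mul_gamma_self, ← Complex.mul_conj']
  simp only [gamma, lap_eq_of_eigen heig, map_mul, Complex.conj_ofReal]
  push_cast
  ring

lemma lapR_energy_of_eigen (heig : ∀ x, -lap p f x = lam * f x) (x : V) :
    lapR p (energy p f) x = 4 * (gamma2 p f f x).re - 2 * lam * energy p f x := by
  have h : (lapR p (energy p f) x : ℂ) = 4 * gamma2 p f f x - 2 * lam * energy p f x := by
    rw [← lap_ofReal, ← funext fun v => two_mul_gamma_self (p := p) f v, lap_const_mul]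
    simp only [gamma2, lap_eq_of_eigen heig, gamma_ofReal_mul_left, gamma_ofReal_mul_right,
      ← two_mul_gamma_self]
    push_cast
    ring
  simpa using congrArg Complex.re h

lemma SatCD.le_gamma2_of_eigen {n κ : ℝ} (hcd : SatCD p n κ f)
    (heig : ∀ x, -lap p f x = lam * f x) (x : V) :
    1 / n * (lam ^ 2 * ‖f x‖ ^ 2) + κ * (energy p f x / 2) ≤ (gamma2 p f f x).re := by
  have hlap : ‖lap p f x‖ ^ 2 = lam ^ 2 * ‖f x‖ ^ 2 := by
    rw [lap_eq_of_eigen heig, norm_mul, Complex.norm_real, Real.norm_eq_abs, mul_pow, sq_abs,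
      neg_sq]
  have hΓ : (gamma p f f x).re = energy p f x / 2 := by
    have := congrArg Complex.re (two_mul_gamma_self (p := p) f x)
    simp only [Complex.mul_re, Complex.re_ofNat, Complex.im_ofNat, zero_mul, sub_zero,
      Complex.ofReal_re] at this
    linarith
  simpa only [hlap, hΓ] using hcd x

/-- Lichnerowicz estimate: summing `CD(n,κ)` against the degrees, the Laplacian terms vanish and
what is left is `λ (λ - λ/n - κ) ∑ d_v |f v|² ≥ 0`. -/
lemma SatCD.le_sub_div_of_eigen {n κ : ℝ} (hG : IsWeightedGraph p) (hlam : 0 < lam)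
    (hf0 : f ≠ 0) (heig : ∀ x, -lap p f x = lam * f x) (hcd : SatCD p n κ f) :
    κ ≤ lam - lam / n := by
  set c := lam * (lam - lam / n - κ)
  set u : V → ℝ := fun v => 4⁻¹ * energy p f v + (lam - κ) / 2 * ‖f v‖ ^ 2
  have hpoint : ∀ v, 0 ≤ deg p v * lapR p u v + c * (deg p v * ‖f v‖ ^ 2) := by
    intro v
    have hlapR : lapR p u v + c * ‖f v‖ ^ 2
        = (gamma2 p f f v).re - (1 / n * (lam ^ 2 * ‖f v‖ ^ 2) + κ * (energy p f v / 2)) := by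
      rw [lapR_add, lapR_const_mul, lapR_const_mul, lapR_energy_of_eigen heig,
        lapR_normSq_of_eigen heig]
      ring
    have hcdv := hcd.le_gamma2_of_eigen heig v
    nlinarith [hG.deg_pos v]
  have hS : 0 < ∑ v, deg p v * ‖f v‖ ^ 2 := by
    obtain ⟨v₀, hv₀⟩ := Function.ne_iff.mp hf0
    exact sum_pos' (fun v _ => mul_nonneg (hG.deg_pos v).le (sq_nonneg _))
      ⟨v₀, mem_univ _, mul_pos (hG.deg_pos v₀) (pow_pos (norm_pos_iff.mpr hv₀) 2)⟩
  have hc : 0 ≤ c * ∑ v, deg p v * ‖f v‖ ^ 2 := by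
    have := sum_nonneg fun v (_ : v ∈ univ) => hpoint v
    rwa [sum_add_distrib, sum_deg_mul_lapR hG, zero_add, ← mul_sum] at this
  have := nonneg_of_mul_nonneg_right (nonneg_of_mul_nonneg_left hc hS) hlam
  linarith

lemma SatCD.energy_mul_le_of_forall_le {n κ β : ℝ} {x₀ : V} (hG : IsWeightedGraph p)
    (heig : ∀ x, -lap p f x = lam * f x) (hcd : SatCD p n κ f)
    (hmax : ∀ y, energy p f y + β * ‖f y‖ ^ 2 ≤ energy p f x₀ + β * ‖f x₀‖ ^ 2) :
    (β - 2 * lam + 2 * κ) * energy p f x₀ ≤ (2 * β - 4 * lam / n) * lam * ‖f x₀‖ ^ 2 := by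
  have hlapR := lapR_nonpos_of_forall_le hG hmax
  rw [lapR_add, lapR_const_mul, lapR_energy_of_eigen heig, lapR_normSq_of_eigen heig] at hlapR
  have hcd₀ := hcd.le_gamma2_of_eigen heig x₀
  have : 4 * (1 / n * (lam ^ 2 * ‖f x₀‖ ^ 2)) = 4 * lam / n * lam * ‖f x₀‖ ^ 2 := by ring
  linarith

end Eigenfunction

lemma bound_coefficients_pos {n κ lam α : ℝ} (hn : 0 < n) (hlam : 0 < lam)
    (hκ : κ ≤ lam - lam / n) (hα : 2 - 2 * κ / lam < α) :
    0 < (α - 2) * lam + 2 * κ ∧ 0 < (α ^ 2 - 4 / n) * lam + 2 * κ * α := by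
  have hαlam : 2 * lam - 2 * κ < α * lam := by
    have := (mul_lt_mul_iff_of_pos_right hlam).2 hα
    rwa [sub_mul, div_mul_cancel₀ _ hlam.ne'] at this
  have hden : 0 < (α - 2) * lam + 2 * κ := by linarith
  have hα₀ : 2 / n < α := by
    refine lt_of_mul_lt_mul_right ?_ hlam.le
    calc 2 / n * lam = 2 * (lam / n) := by ring
      _ ≤ 2 * lam - 2 * κ := by linarith
      _ < α * lam := hαlam
  have hsplit : (α ^ 2 - 4 / n) * lam + 2 * κ * α
      = α * ((α - 2) * lam + 2 * κ) + 2 * lam * (α - 2 / n) := by ring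
  exact ⟨hden, hsplit ▸ add_pos (mul_pos ((div_pos two_pos hn).trans hα₀) hden)
    (mul_pos (mul_pos two_pos hlam) (sub_pos.2 hα₀))⟩

theorem gradient_eigenfunction_bound_general {V : Type*} [Fintype V]
    (p : V → V → ℝ) (hG : IsWeightedGraph p)
    (n κ : ℝ) (hn : 1 < n) (f : V → ℂ) (lam : ℝ) (hlam : 0 < lam)
    (hf0 : f ≠ 0) (heig : ∀ x, -lap p f x = (lam : ℂ) * f x)
    (hcd : SatCD p n κ f) (α : ℝ) (hα : 2 - 2 * κ / lam < α) (x : V) :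
    energy p f x + α * lam * ‖f x‖ ^ 2 ≤
      lam * ((α ^ 2 - 4 / n) * lam + 2 * κ * α) / ((α - 2) * lam + 2 * κ) *
        ⨆ z : V, ‖f z‖ ^ 2 := by
  have hκ := hcd.le_sub_div_of_eigen hG hlam hf0 heig
  obtain ⟨hden, hnum⟩ := bound_coefficients_pos (by linarith) hlam hκ hα
  obtain ⟨x₀, -, hx₀⟩ := exists_max_image univ
    (fun v => energy p f v + α * lam * ‖f v‖ ^ 2) ⟨x, mem_univ x⟩
  have hE := hcd.energy_mul_le_of_forall_le hG heig fun y => hx₀ y (mem_univ y)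
  have hM : ‖f x₀‖ ^ 2 ≤ ⨆ z, ‖f z‖ ^ 2 :=
    le_ciSup (f := fun z => ‖f z‖ ^ 2) (Set.finite_range _).bddAbove x₀
  rw [div_mul_eq_mul_div, le_div_iff₀ hden]
  calc (energy p f x + α * lam * ‖f x‖ ^ 2) * ((α - 2) * lam + 2 * κ)
      ≤ (energy p f x₀ + α * lam * ‖f x₀‖ ^ 2) * ((α - 2) * lam + 2 * κ) :=
        mul_le_mul_of_nonneg_right (hx₀ x (mem_univ x)) hden.le
    _ ≤ lam * ((α ^ 2 - 4 / n) * lam + 2 * κ * α) * ‖f x₀‖ ^ 2 := by linear_combination hE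
    _ ≤ lam * ((α ^ 2 - 4 / n) * lam + 2 * κ * α) * ⨆ z, ‖f z‖ ^ 2 :=
        mul_le_mul_of_nonneg_left hM (mul_pos hlam hnum).le

/-- Theorem 2.3.  For a harmonic eigenfunction `f` of `−Δ`
with eigenvalue `λ > 0` satisfying `CD(n,κ)`, and any `α > 2 − 2κ/λ`:
`|∇f|²(x) + αλ|f(x)|²
  ≤ λ((α² − 4/n)λ + 2κα)/((α − 2)λ + 2κ) · max_z |f(z)|²`. -/
theorem gradient_eigenfunction_bound {V : Type*} [Fintype V] [Nonempty V]
    (p : V → V → ℝ) (hG : IsWeightedGraph p) (hconn : Connected p)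
    (n κ : ℝ) (hn : 1 < n) (f : V → ℂ) (lam : ℝ) (hlam : 0 < lam)
    (hf0 : f ≠ 0) (heig : ∀ x, -lap p f x = (lam : ℂ) * f x)
    (hcd : SatCD p n κ f) (α : ℝ) (hα : 2 - 2 * κ / lam < α) (x : V) :
    energy p f x + α * lam * ‖f x‖ ^ 2 ≤
      lam * ((α ^ 2 - 4 / n) * lam + 2 * κ * α) / ((α - 2) * lam + 2 * κ) *
        ⨆ z : V, ‖f z‖ ^ 2 :=
  gradient_eigenfunction_bound_general p hG n κ hn f lam hlam hf0 heig hcd α hα x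

end Mag
end
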